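/- Let 0 ≤ β < 1/3 and δ ∈ (0,1) be real numbers, and let ε satisfy 0 < ε < (1−3β)/(2(1−β)). For each integer n ≥ 2, set m_n = ⌈n^β⌉ and N_n = ⌈(n/m_n)^{1/2−ε}⌉, and let B_1, …, B_{N_n} be independent identically distributed random variables on a probability space taking values in {0,1} with P(B_j = 1) = 1/m_n. Then m_n² · P( ∑_{j=1}^{N_n} B_j ≥ (1+δ)·N_n/m_n ) tends to 0 as n → ∞. -/

import Mathlib

/-!
A Chernoff bound at `s = log (1 + δ)` gives, for a sum of `N` independent Bernoulli(`p`)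
variables, `P(∑ B_j ≥ (1 + δ) N p) ≤ exp (-Δ N p)` with `Δ = (1 + δ) log (1 + δ) - δ > 0`.
Since `m_n ≤ 2 n ^ β`, we have `N_n / m_n ≥ n ^ γ / 2 ^ (a + 1)` with `a = 1/2 - ε` and
`γ = (1 - β) a - β`, and the condition on `ε` says exactly `γ > 0`. So the probability decays
like `exp (-c n ^ γ)`, which beats `m_n² ≤ 4 n ^ (2β)`.
-/

open MeasureTheory ProbabilityTheory Filter Real Topology
open scoped ENNReal

lemma one_add_mul_log_one_add_sub_pos {δ : ℝ} (hδ : 0 < δ) :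
    0 < (1 + δ) * log (1 + δ) - δ := by
  have h := lt_log_one_add_of_pos hδ
  rw [div_lt_iff₀ (by linarith)] at h
  nlinarith

section ZeroOne

variable {Ω : Type*} {X : Ω → ℝ}

lemma eq_indicator_of_zero_or_one (hX : ∀ ω, X ω = 0 ∨ X ω = 1) :
    X = {ω | X ω = 1}.indicator 1 := by
  funext ω
  rcases hX ω with h | h <;> simp [h]

lemma exp_mul_eq_of_zero_or_one (hX : ∀ ω, X ω = 0 ∨ X ω = 1) (t : ℝ) :
    (fun ω => exp (t * X ω)) = fun ω => 1 + (exp t - 1) * X ω := by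
  funext ω
  rcases hX ω with h | h <;> simp [h]

variable [MeasurableSpace Ω] {μ : Measure Ω}

lemma integrable_of_zero_or_one [IsFiniteMeasure μ] (hXm : Measurable X)
    (hX : ∀ ω, X ω = 0 ∨ X ω = 1) : Integrable X μ := by
  rw [eq_indicator_of_zero_or_one hX]
  exact (integrable_const 1).indicator (hXm (measurableSet_singleton 1))

lemma integral_eq_measureReal_of_zero_or_one (hXm : Measurable X) (hX : ∀ ω, X ω = 0 ∨ X ω = 1) :
    ∫ ω, X ω ∂μ = μ.real {ω | X ω = 1} := by
  conv_lhs => rw [eq_indicator_of_zero_or_one hX]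
  exact integral_indicator_one (hXm (measurableSet_singleton 1))

lemma integrable_exp_mul_of_zero_or_one [IsFiniteMeasure μ] (hXm : Measurable X)
    (hX : ∀ ω, X ω = 0 ∨ X ω = 1) (t : ℝ) : Integrable (fun ω => exp (t * X ω)) μ := by
  rw [exp_mul_eq_of_zero_or_one hX]
  exact (integrable_const 1).add ((integrable_of_zero_or_one hXm hX).const_mul _)

lemma mgf_eq_of_zero_or_one [IsProbabilityMeasure μ] (hXm : Measurable X)
    (hX : ∀ ω, X ω = 0 ∨ X ω = 1) (t : ℝ) :
    mgf X μ t = 1 + (exp t - 1) * μ.real {ω | X ω = 1} := by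
  rw [mgf, exp_mul_eq_of_zero_or_one hX, integral_add (integrable_const 1)
    ((integrable_of_zero_or_one hXm hX).const_mul _), integral_const_mul,
    integral_eq_measureReal_of_zero_or_one hXm hX]
  simp

theorem measureReal_sum_ge_le_exp_of_zero_or_one [IsProbabilityMeasure μ] {ι : Type*}
    [Fintype ι] {B : ι → Ω → ℝ} (hBm : ∀ i, Measurable (B i))
    (hB : ∀ i ω, B i ω = 0 ∨ B i ω = 1) {p : ℝ} (hp : ∀ i, μ.real {ω | B i ω = 1} = p)
    (hindep : iIndepFun B μ) {δ : ℝ} (hδ : 0 < δ) :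
    μ.real {ω | (1 + δ) * (Fintype.card ι * p) ≤ ∑ i, B i ω}
      ≤ exp (-(((1 + δ) * log (1 + δ) - δ) * (Fintype.card ι * p))) := by
  set s := log (1 + δ)
  have hes : exp s = 1 + δ := exp_log (by linarith)
  have hmgf : mgf (∑ i, B i) μ s ≤ exp (δ * (Fintype.card ι * p)) := by
    rw [hindep.mgf_sum hBm]
    calc ∏ i, mgf (B i) μ s ≤ ∏ _i : ι, exp (δ * p) := by
          refine Finset.prod_le_prod (fun i _ => mgf_nonneg) fun i _ => ?_
          rw [mgf_eq_of_zero_or_one (hBm i) (hB i), hes, hp, add_sub_cancel_left, add_comm]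
          exact add_one_le_exp _
      _ = exp (δ * (Fintype.card ι * p)) := by
          rw [Finset.prod_const, ← exp_nat_mul, Finset.card_univ]
          ring_nf
  have hint : Integrable (fun ω => exp (s * (∑ i, B i) ω)) μ :=
    hindep.integrable_exp_mul_sum hBm fun i _ => integrable_exp_mul_of_zero_or_one (hBm i) (hB i) s
  calc μ.real {ω | (1 + δ) * (Fintype.card ι * p) ≤ ∑ i, B i ω}
      ≤ exp (-s * ((1 + δ) * (Fintype.card ι * p))) * mgf (∑ i, B i) μ s := by
        simpa only [Finset.sum_apply] using
          measure_ge_le_exp_mul_mgf _ (log_nonneg (by linarith)) hint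
    _ ≤ exp (-s * ((1 + δ) * (Fintype.card ι * p))) * exp (δ * (Fintype.card ι * p)) := by
        gcongr
    _ = exp (-(((1 + δ) * s - δ) * (Fintype.card ι * p))) := by
        rw [← exp_add]
        ring_nf

end ZeroOne

lemma tendsto_rpow_mul_exp_neg_mul_rpow_atTop_nhds_zero (s : ℝ) {b γ : ℝ} (hb : 0 < b)
    (hγ : 0 < γ) : Tendsto (fun x : ℝ => x ^ s * exp (-b * x ^ γ)) atTop (𝓝 0) := by
  refine ((tendsto_rpow_mul_exp_neg_mul_atTop_nhds_zero (s / γ) b hb).comp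
    (tendsto_rpow_atTop hγ)).congr' ?_
  filter_upwards [eventually_ge_atTop 0] with x hx
  simp [← rpow_mul hx, mul_div_cancel₀ s hγ.ne']

lemma rpow_div_two_rpow_le_div_rpow_div {x a β m : ℝ} (hx : 0 < x) (ha : 0 ≤ a) (hm : 0 < m)
    (hmx : m ≤ 2 * x ^ β) : x ^ ((1 - β) * a - β) / 2 ^ (a + 1) ≤ (x / m) ^ a / m := by
  calc x ^ ((1 - β) * a - β) / 2 ^ (a + 1) = (x / (2 * x ^ β)) ^ a / (2 * x ^ β) := by
        rw [div_rpow hx.le (by positivity), mul_rpow (by norm_num) (by positivity),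
          ← rpow_mul hx.le, rpow_sub hx, rpow_add (by norm_num), rpow_one, sub_mul, one_mul,
          rpow_sub hx, mul_comm β a]
        field_simp
    _ ≤ (x / m) ^ a / m := by gcongr

section NatCeilRpow

variable {x β : ℝ} (hx : 1 ≤ x) (hβ : 0 ≤ β)
include hx hβ

lemma natCeil_rpow_le_two_mul_rpow : (⌈x ^ β⌉₊ : ℝ) ≤ 2 * x ^ β :=
  Nat.ceil_le_two_mul (by linarith [one_le_rpow hx hβ])

lemma natCeil_rpow_sq_le : (⌈x ^ β⌉₊ : ℝ) ^ 2 ≤ 4 * x ^ (2 * β) := by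
  calc (⌈x ^ β⌉₊ : ℝ) ^ 2 ≤ (2 * x ^ β) ^ 2 := by
        gcongr
        exact natCeil_rpow_le_two_mul_rpow hx hβ
    _ = 4 * x ^ (2 * β) := by
        rw [mul_comm 2 β, rpow_mul (by linarith), rpow_two]
        ring

lemma rpow_div_two_rpow_le_natCeil_div {a : ℝ} (ha : 0 ≤ a) :
    x ^ ((1 - β) * a - β) / 2 ^ (a + 1) ≤ (⌈(x / ⌈x ^ β⌉₊) ^ a⌉₊ : ℝ) / ⌈x ^ β⌉₊ :=
  (rpow_div_two_rpow_le_div_rpow_div (by linarith) ha (by positivity)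
    (natCeil_rpow_le_two_mul_rpow hx hβ)).trans (by gcongr; exact Nat.le_ceil _)

end NatCeilRpow

theorem stmt_9_general
    (β δ ε : ℝ) (hβ0 : 0 ≤ β) (hβ1 : β < 1 / 3)
    (hδ0 : 0 < δ)
    (hε1 : ε < (1 - 3 * β) / (2 * (1 - β)))
    (Ω : ℕ → Type*) [∀ n, MeasurableSpace (Ω n)]
    (μ : (n : ℕ) → Measure (Ω n)) [∀ n, IsProbabilityMeasure (μ n)]
    (B : (n : ℕ) → Fin ⌈((n : ℝ) / (⌈(n : ℝ) ^ β⌉₊ : ℝ)) ^ (1 / 2 - ε)⌉₊ → Ω n → ℝ)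
    (hmeas : ∀ n j, Measurable (B n j))
    (hval : ∀ n j ω, B n j ω = 0 ∨ B n j ω = 1)
    (hprob : ∀ n : ℕ, 2 ≤ n → ∀ j,
      μ n {ω | B n j ω = 1} = ((⌈(n : ℝ) ^ β⌉₊ : ℝ≥0∞))⁻¹)
    (hindep : ∀ n, iIndepFun (B n) (μ n)) :
    Tendsto
      (fun n : ℕ => ((⌈(n : ℝ) ^ β⌉₊ : ℝ)) ^ 2
        * (μ n {ω | (1 + δ)
              * (⌈((n : ℝ) / (⌈(n : ℝ) ^ β⌉₊ : ℝ)) ^ (1 / 2 - ε)⌉₊ : ℝ)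
              / (⌈(n : ℝ) ^ β⌉₊ : ℝ)
            ≤ ∑ j, B n j ω}).toReal)
      atTop (nhds 0) := by
  set γ := (1 - β) * (1 / 2 - ε) - β
  set Δ := (1 + δ) * log (1 + δ) - δ
  have hε : ε * (2 * (1 - β)) < 1 - 3 * β := (lt_div_iff₀ (by linarith)).mp hε1
  have ha : 0 ≤ 1 / 2 - ε := by nlinarith
  have hγ : 0 < γ := by simp only [γ]; nlinarith
  have hΔ : 0 < Δ := one_add_mul_log_one_add_sub_pos hδ0
  have hlim := ((tendsto_rpow_mul_exp_neg_mul_rpow_atTop_nhds_zero (2 * β)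
    (by positivity : 0 < Δ / 2 ^ (1 / 2 - ε + 1)) hγ).const_mul 4).comp tendsto_natCast_atTop_atTop
  rw [mul_zero] at hlim
  refine squeeze_zero' (.of_forall fun n => by positivity) ?_ hlim
  filter_upwards [eventually_ge_atTop 2] with n hn
  have hn1 : (1 : ℝ) ≤ n := by exact_mod_cast (by omega : 1 ≤ n)
  set m : ℝ := (⌈(n : ℝ) ^ β⌉₊ : ℝ)
  set K : ℕ := ⌈((n : ℝ) / m) ^ (1 / 2 - ε)⌉₊
  have hp : ∀ j, (μ n).real {ω | B n j ω = 1} = 1 / m := fun j => by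
    rw [measureReal_def, hprob n hn j, ENNReal.toReal_inv,
      ENNReal.toReal_natCast, one_div]
  have hch := measureReal_sum_ge_le_exp_of_zero_or_one (hmeas n) (hval n) hp (hindep n) hδ0
  rw [Fintype.card_fin, mul_one_div] at hch
  rw [mul_div_assoc, ← measureReal_def]
  calc _ ≤ 4 * (n : ℝ) ^ (2 * β) * exp (-(Δ * (K / m))) :=
        mul_le_mul (natCeil_rpow_sq_le hn1 hβ0) hch (by positivity) (by positivity)
    _ ≤ 4 * (n : ℝ) ^ (2 * β) * exp (-(Δ * ((n : ℝ) ^ γ / 2 ^ (1 / 2 - ε + 1)))) := by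
        gcongr _ * exp (-(Δ * ?_))
        exact rpow_div_two_rpow_le_natCeil_div hn1 hβ0 ha
    _ = 4 * ((n : ℝ) ^ (2 * β) * exp (-(Δ / 2 ^ (1 / 2 - ε + 1)) * (n : ℝ) ^ γ)) := by
        ring_nf

/-- **Key estimate for Regime B-4 in the proof of Lemma 5**: with `m_n = ⌈n^β⌉`
(where `0 ≤ β < 1/3`), `N_n = ⌈(n/m_n)^{1/2−ε}⌉` (where
`0 < ε < (1−3β)/(2(1−β))`), `δ ∈ (0,1)`, and i.i.d. `{0,1}`-valued
`B_1, …, B_{N_n}` with `P(B_j = 1) = 1/m_n`, one has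
`m_n² · P(∑ B_j ≥ (1+δ)·N_n/m_n) → 0` as `n → ∞`. -/
theorem stmt_9
    (β δ ε : ℝ) (hβ0 : 0 ≤ β) (hβ1 : β < 1 / 3)
    (hδ0 : 0 < δ) (hδ1 : δ < 1)
    (hε0 : 0 < ε) (hε1 : ε < (1 - 3 * β) / (2 * (1 - β)))
    (Ω : ℕ → Type*) [∀ n, MeasurableSpace (Ω n)]
    (μ : (n : ℕ) → Measure (Ω n)) [∀ n, IsProbabilityMeasure (μ n)]
    (B : (n : ℕ) → Fin ⌈((n : ℝ) / (⌈(n : ℝ) ^ β⌉₊ : ℝ)) ^ (1 / 2 - ε)⌉₊ → Ω n → ℝ)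
    (hmeas : ∀ n j, Measurable (B n j))
    (hval : ∀ n j ω, B n j ω = 0 ∨ B n j ω = 1)
    (hprob : ∀ n : ℕ, 2 ≤ n → ∀ j,
      μ n {ω | B n j ω = 1} = ((⌈(n : ℝ) ^ β⌉₊ : ℝ≥0∞))⁻¹)
    (hindep : ∀ n, iIndepFun (B n) (μ n)) :
    Tendsto
      (fun n : ℕ => ((⌈(n : ℝ) ^ β⌉₊ : ℝ)) ^ 2
        * (μ n {ω | (1 + δ)
              * (⌈((n : ℝ) / (⌈(n : ℝ) ^ β⌉₊ : ℝ)) ^ (1 / 2 - ε)⌉₊ : ℝ)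
              / (⌈(n : ℝ) ^ β⌉₊ : ℝ)
            ≤ ∑ j, B n j ω}).toReal)
      atTop (nhds 0) :=
  stmt_9_general β δ ε hβ0 hβ1 hδ0 hε1 Ω μ B hmeas hval hprob hindep
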